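/- For the phase-plane ODE dP/dq = c - f(q)/P with P(0) = c*/μ, where 0 < c < c* and f∈C¹([0,1]) satisfies f(0)=f(1)=0 and f'(1)<0, the solution P^c stays strictly below the semi-wave trajectory P_{c*} for q>0 as long as both are positive, and there exists Q^c ∈ (0,1) with P^c > 0 on [0,Q^c) and P^c(Q^c) = 0. -/

import Mathlib

/-!
Along both trajectories, `D = P_{c*} - P^c` solves the linear equation
`D' = (c* - c) + f/(P^c P_{c*}) · D` with `D(0) = 0`; multiplying by the integrating factor
`exp(-∫ f/(P^c P_{c*}))` shows that `D > 0` as long as `P^c > 0`. Since `f'(1) < 0` and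
`f(1) = 0`, `f > 0` just to the left of `1`, where `D' ≥ c* - c > 0`; hence `P^c` cannot stay
positive up to `q = 1`, for then `0 ≤ P^c(1) < P_{c*}(1) = 0`. So `P^c` has a first zero `Q^c < 1`.
-/

open Set Filter Topology

theorem pos_of_hasDerivAt_eq_const_add_mul {D g : ℝ → ℝ} {a b k : ℝ} (hab : a < b)
    (hk : 0 < k) (hD : ContinuousOn D (Icc a b)) (hg : ContinuousOn g (Icc a b)) (hDa : D a = 0)
    (hD' : ∀ x ∈ Ioo a b, HasDerivAt D (k + g x * D x) x) : 0 < D b := by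
  set G : ℝ → ℝ := fun x => ∫ t in a..x, g t
  have hG : ContinuousOn G (Icc a b) := by
    rw [← uIcc_of_le hab.le] at hg ⊢
    exact intervalIntegral.continuousOn_primitive_interval hg.integrableOn_uIcc
  have hG' : ∀ x ∈ Ioo a b, HasDerivAt G (g x) x := fun x hx =>
    intervalIntegral.integral_hasDerivAt_right
      ((hg.mono (Icc_subset_Icc le_rfl hx.2.le)).intervalIntegrable_of_Icc hx.1.le)
      ((hg.mono Ioo_subset_Icc_self).stronglyMeasurableAtFilter isOpen_Ioo x hx)
      (hg.continuousAt (Icc_mem_nhds hx.1 hx.2))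
  have hE : StrictMonoOn (fun x => Real.exp (-G x) * D x) (Icc a b) := by
    refine strictMonoOn_of_hasDerivWithinAt_pos (convex_Icc a b) (hG.neg.rexp.mul hD)
      (f' := fun x => k * Real.exp (-G x)) (fun x hx => ?_) (fun x _ => by positivity)
    rw [interior_Icc] at hx ⊢
    refine (((hG' x hx).neg.exp.mul (hD' x hx)).congr_deriv ?_).hasDerivWithinAt
    simp only [Pi.neg_apply]
    ring
  have hEb := hE (left_mem_Icc.2 hab.le) (right_mem_Icc.2 hab.le) hab
  simp only [hDa, mul_zero] at hEb
  exact pos_of_mul_pos_right hEb (Real.exp_pos _).le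

theorem exists_first_zero {φ : ℝ → ℝ} {a b : ℝ} (hab : a ≤ b)
    (hφ : ContinuousOn φ (Icc a b)) (ha : 0 < φ a) (hb : φ b ≤ 0) :
    ∃ Q ∈ Ioc a b, (∀ s ∈ Ico a Q, 0 < φ s) ∧ φ Q = 0 := by
  set S := Icc a b ∩ φ ⁻¹' Iic 0
  have hS : IsCompact S := isCompact_Icc.of_isClosed_subset
    (hφ.preimage_isClosed_of_isClosed isClosed_Icc isClosed_Iic) inter_subset_left
  obtain ⟨⟨haQ, hQb⟩, hQ0⟩ : sInf S ∈ S := hS.sInf_mem ⟨b, right_mem_Icc.2 hab, hb⟩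
  have hpos : ∀ s ∈ Ico a (sInf S), 0 < φ s := fun s hs => by
    by_contra! hs0
    exact hs.2.not_ge (csInf_le hS.bddBelow ⟨⟨hs.1, hs.2.le.trans hQb⟩, hs0⟩)
  obtain ⟨z, hz, hz0⟩ : 0 ∈ φ '' Icc a (sInf S) :=
    intermediate_value_Icc' haQ (hφ.mono (Icc_subset_Icc le_rfl hQb)) ⟨hQ0, ha.le⟩
  have hzQ : z = sInf S :=
    hz.2.eq_or_lt.resolve_right fun hlt => (hpos z ⟨hz.1, hlt⟩).ne' hz0
  refine ⟨sInf S, ⟨haQ.lt_of_ne fun h => ha.ne' ?_, hQb⟩, hpos, hzQ ▸ hz0⟩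
  rw [h, ← hzQ, hz0]

theorem exists_Ioo_pos_of_deriv_neg {f : ℝ → ℝ} {x₀ : ℝ} (hf : deriv f x₀ < 0)
    (hx₀ : f x₀ = 0) : ∃ a < x₀, ∀ x ∈ Ioo a x₀, 0 < f x := by
  have hsign : ∀ᶠ x in 𝓝[<] x₀, SignType.sign (f x) = SignType.sign (x₀ - x) :=
    nhdsWithin_le_nhds (eventually_nhdsWithin_sign_eq_of_deriv_neg hf hx₀)
  obtain ⟨a, ha, hsub⟩ :=
    mem_nhdsLT_iff_exists_Ioo_subset.1 (hsign.and self_mem_nhdsWithin)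
  refine ⟨a, ha, fun x hx => ?_⟩
  obtain ⟨hfx, hxx₀⟩ := hsub hx
  rwa [sign_pos (sub_pos.2 hxx₀), sign_eq_one_iff] at hfx

theorem hasDerivAt_sub_of_phase_ode {f P₁ P₂ : ℝ → ℝ} {c₁ c₂ s : ℝ} (h₁ : P₁ s ≠ 0)
    (h₂ : P₂ s ≠ 0) (hP₁ : HasDerivAt P₁ (c₁ - f s / P₁ s) s)
    (hP₂ : HasDerivAt P₂ (c₂ - f s / P₂ s) s) :
    HasDerivAt (fun t => P₁ t - P₂ t)
      ((c₁ - c₂) + f s / (P₂ s * P₁ s) * (P₁ s - P₂ s)) s :=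
  (hP₁.sub hP₂).congr_deriv (by field_simp; ring)

section PhasePlane

variable {f Pstar Pc : ℝ → ℝ} {cstar c a b : ℝ}

theorem phase_lt_of_speed_lt (hab : a < b) (hcc : c < cstar)
    (hf : ContinuousOn f (Icc a b)) (hPstar : ContinuousOn Pstar (Icc a b))
    (hPc : ContinuousOn Pc (Icc a b))
    (hPstar_pos : ∀ t ∈ Icc a b, 0 < Pstar t) (hPc_pos : ∀ t ∈ Icc a b, 0 < Pc t)
    (hPstar_ode : ∀ t ∈ Ioo a b, HasDerivAt Pstar (cstar - f t / Pstar t) t)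
    (hPc_ode : ∀ t ∈ Ioo a b, HasDerivAt Pc (c - f t / Pc t) t) (ha : Pc a = Pstar a) :
    Pc b < Pstar b := by
  have hD := pos_of_hasDerivAt_eq_const_add_mul hab (sub_pos.2 hcc) (hPstar.sub hPc)
    (hf.div (hPc.mul hPstar) fun t ht => (mul_pos (hPc_pos t ht) (hPstar_pos t ht)).ne')
    (sub_eq_zero.2 ha.symm) fun t ht =>
      hasDerivAt_sub_of_phase_ode (hPstar_pos t (Ioo_subset_Icc_self ht)).ne'
        (hPc_pos t (Ioo_subset_Icc_self ht)).ne' (hPstar_ode t ht) (hPc_ode t ht)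
  exact sub_pos.1 hD

theorem phase_lt_of_speed_lt_of_nonneg (hab : a < b) (hcc : c < cstar)
    (hf : ∀ t ∈ Ioo a b, 0 ≤ f t) (hPstar : ContinuousOn Pstar (Icc a b))
    (hPc : ContinuousOn Pc (Icc a b))
    (hPstar_pos : ∀ t ∈ Ioo a b, 0 < Pstar t) (hPc_pos : ∀ t ∈ Ioo a b, 0 < Pc t)
    (hPstar_ode : ∀ t ∈ Ioo a b, HasDerivAt Pstar (cstar - f t / Pstar t) t)
    (hPc_ode : ∀ t ∈ Ioo a b, HasDerivAt Pc (c - f t / Pc t) t)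
    (hle : ∀ t ∈ Ioo a b, Pc t ≤ Pstar t) :
    Pc b < Pstar b := by
  have hmono : StrictMonoOn (fun t => Pstar t - Pc t) (Icc a b) := by
    refine strictMonoOn_of_hasDerivWithinAt_pos (convex_Icc a b) (hPstar.sub hPc)
      (f' := fun t => (cstar - c) + f t / (Pc t * Pstar t) * (Pstar t - Pc t))
      (fun t ht => ?_) (fun t ht => ?_)
    · rw [interior_Icc] at ht ⊢
      exact (hasDerivAt_sub_of_phase_ode (hPstar_pos t ht).ne' (hPc_pos t ht).ne'
        (hPstar_ode t ht) (hPc_ode t ht)).hasDerivWithinAt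
    · rw [interior_Icc] at ht
      have hgD : 0 ≤ f t / (Pc t * Pstar t) * (Pstar t - Pc t) :=
        mul_nonneg (div_nonneg (hf t ht) (mul_pos (hPc_pos t ht) (hPstar_pos t ht)).le)
          (sub_nonneg.2 (hle t ht))
      linarith
  obtain ⟨m, hm⟩ := nonempty_Ioo.2 hab
  have hDm := hmono (Ioo_subset_Icc_self hm) (right_mem_Icc.2 hab.le) hm.2
  linarith [hle m hm]

theorem phase_lt_of_pos (hcc : c < cstar) (hf : ContinuousOn f (Icc 0 1))
    (hPstar : ContinuousOn Pstar (Icc 0 1)) (hPc : ContinuousOn Pc (Icc 0 1))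
    (hPstar_pos : ∀ t ∈ Ico (0:ℝ) 1, 0 < Pstar t)
    (hPstar_ode : ∀ t ∈ Ioo (0:ℝ) 1, HasDerivAt Pstar (cstar - f t / Pstar t) t)
    (hPc_ode : ∀ t ∈ Ioo (0:ℝ) 1, 0 < Pc t → HasDerivAt Pc (c - f t / Pc t) t)
    (h0 : Pc 0 = Pstar 0) {s : ℝ} (hs : s ∈ Ioo (0:ℝ) 1) (hpos : ∀ t ∈ Icc 0 s, 0 < Pc t) :
    Pc s < Pstar s := by
  have hsub : Icc 0 s ⊆ Icc 0 1 := Icc_subset_Icc_right hs.2.le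
  have hIoo : Ioo 0 s ⊆ Ioo 0 1 := Ioo_subset_Ioo_right hs.2.le
  exact phase_lt_of_speed_lt hs.1 hcc (hf.mono hsub) (hPstar.mono hsub) (hPc.mono hsub)
    (fun t ht => hPstar_pos t ⟨ht.1, ht.2.trans_lt hs.2⟩) hpos
    (fun t ht => hPstar_ode t (hIoo ht))
    (fun t ht => hPc_ode t (hIoo ht) (hpos t (Ioo_subset_Icc_self ht))) h0

theorem exists_phase_nonpos (hcc : c < cstar) (hf : ContinuousOn f (Icc 0 1)) (hf1 : f 1 = 0)
    (hf'1 : deriv f 1 < 0) (hPstar : ContinuousOn Pstar (Icc 0 1))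
    (hPc : ContinuousOn Pc (Icc 0 1)) (hPstar_pos : ∀ t ∈ Ico (0:ℝ) 1, 0 < Pstar t)
    (hPstar_ode : ∀ t ∈ Ioo (0:ℝ) 1, HasDerivAt Pstar (cstar - f t / Pstar t) t)
    (hPc_ode : ∀ t ∈ Ioo (0:ℝ) 1, 0 < Pc t → HasDerivAt Pc (c - f t / Pc t) t)
    (h0 : Pc 0 = Pstar 0) (hPstar1 : Pstar 1 = 0) :
    ∃ s ∈ Ico (0:ℝ) 1, Pc s ≤ 0 := by
  by_contra! hall
  obtain ⟨a, ha1, hfa⟩ := exists_Ioo_pos_of_deriv_neg hf'1 hf1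
  have hIoo : Ioo (max a 0) 1 ⊆ Ioo 0 1 := Ioo_subset_Ioo_left (le_max_right _ _)
  have hIcc : Icc (max a 0) 1 ⊆ Icc 0 1 := Icc_subset_Icc_left (le_max_right _ _)
  have hlt1 : Pc 1 < Pstar 1 :=
    phase_lt_of_speed_lt_of_nonneg (max_lt ha1 one_pos) hcc
      (fun t ht => (hfa t ⟨(le_max_left _ _).trans_lt ht.1, ht.2⟩).le)
      (hPstar.mono hIcc) (hPc.mono hIcc)
      (fun t ht => hPstar_pos t (Ioo_subset_Ico_self (hIoo ht)))
      (fun t ht => hall t (Ioo_subset_Ico_self (hIoo ht)))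
      (fun t ht => hPstar_ode t (hIoo ht))
      (fun t ht => hPc_ode t (hIoo ht) (hall t (Ioo_subset_Ico_self (hIoo ht))))
      fun t ht => (phase_lt_of_pos hcc hf hPstar hPc hPstar_pos hPstar_ode hPc_ode h0
        (hIoo ht) fun u hu => hall u ⟨hu.1, hu.2.trans_lt (hIoo ht).2⟩).le
  have hPc1 : 0 ≤ Pc 1 :=
    ContinuousWithinAt.closure_le
      (by rw [closure_Ico zero_ne_one]; exact right_mem_Icc.2 zero_le_one)
      continuousWithinAt_const ((hPc 1 (right_mem_Icc.2 zero_le_one)).mono Ico_subset_Icc_self)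
      fun t ht => (hall t ht).le
  linarith

end PhasePlane

theorem phase_plane_comparison_general
    (f Pstar Pc : ℝ → ℝ) (cstar c μ : ℝ)
    (hμ : 0 < μ) (hc : 0 < c) (hcc : c < cstar)
    (hf : ContDiffOn ℝ 1 f (Icc 0 1))
    (hf1 : f 1 = 0)
    (hf'1 : deriv f 1 < 0)
    -- Pstar is the semi-wave trajectory for speed c*
    (hPstar_cont : ContinuousOn Pstar (Icc 0 1))
    (hPstar_pos : ∀ s ∈ Ico (0:ℝ) 1, 0 < Pstar s)
    (hPstar_ode : ∀ s ∈ Ioo (0:ℝ) 1, HasDerivAt Pstar (cstar - f s / Pstar s) s)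
    (hPstar0 : Pstar 0 = cstar / μ)
    (hPstar1 : Pstar 1 = 0)
    -- Pc solves the ODE with speed c and the same initial datum, while positive
    (hPc_cont : ContinuousOn Pc (Icc 0 1))
    (hPc_ode : ∀ s ∈ Ioo (0:ℝ) 1, 0 < Pc s → HasDerivAt Pc (c - f s / Pc s) s)
    (hPc0 : Pc 0 = cstar / μ) :
    ∃ Q ∈ Ioo (0:ℝ) 1,
      (∀ s ∈ Ico (0:ℝ) Q, 0 < Pc s) ∧ Pc Q = 0 ∧
      ∀ s ∈ Ioo (0:ℝ) Q, Pc s < Pstar s := by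
  have hPc0_pos : 0 < Pc 0 := hPc0 ▸ div_pos (hc.trans hcc) hμ
  have h0 : Pc 0 = Pstar 0 := hPc0.trans hPstar0.symm
  obtain ⟨s₁, hs₁, hPc_s₁⟩ := exists_phase_nonpos hcc hf.continuousOn hf1 hf'1 hPstar_cont
    hPc_cont hPstar_pos hPstar_ode hPc_ode h0 hPstar1
  obtain ⟨Q, hQ, hpos, hQ0⟩ :=
    exists_first_zero hs₁.1 (hPc_cont.mono (Icc_subset_Icc_right hs₁.2.le)) hPc0_pos hPc_s₁
  exact ⟨Q, ⟨hQ.1, hQ.2.trans_lt hs₁.2⟩, hpos, hQ0, fun s hs =>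
    phase_lt_of_pos hcc hf.continuousOn hPstar_cont hPc_cont hPstar_pos hPstar_ode hPc_ode h0
      ⟨hs.1, hs.2.trans (hQ.2.trans_lt hs₁.2)⟩ fun t ht => hpos t ⟨ht.1, ht.2.trans_lt hs.2⟩⟩

/-- For 0 < c < c*, the solution P^c of the phase-plane ODE
    dP/dq = c - f(q)/P with P(0) = c*/μ stays strictly below the semi-wave
    trajectory P_{c*} while both are positive, and hits 0 at some Q^c ∈ (0,1):
    P^c > 0 on [0,Q^c) and P^c(Q^c) = 0. -/
theorem phase_plane_comparison
    (f Pstar Pc : ℝ → ℝ) (cstar c μ : ℝ)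
    (hμ : 0 < μ) (hc : 0 < c) (hcc : c < cstar)
    (hf : ContDiffOn ℝ 1 f (Icc 0 1))
    (hf0 : f 0 = 0) (hf1 : f 1 = 0)
    (hf'1 : deriv f 1 < 0)
    -- Pstar is the semi-wave trajectory for speed c*
    (hPstar_cont : ContinuousOn Pstar (Icc 0 1))
    (hPstar_pos : ∀ s ∈ Ico (0:ℝ) 1, 0 < Pstar s)
    (hPstar_ode : ∀ s ∈ Ioo (0:ℝ) 1, HasDerivAt Pstar (cstar - f s / Pstar s) s)
    (hPstar0 : Pstar 0 = cstar / μ)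
    (hPstar1 : Pstar 1 = 0)
    -- Pc solves the ODE with speed c and the same initial datum, while positive
    (hPc_cont : ContinuousOn Pc (Icc 0 1))
    (hPc_ode : ∀ s ∈ Ioo (0:ℝ) 1, 0 < Pc s → HasDerivAt Pc (c - f s / Pc s) s)
    (hPc0 : Pc 0 = cstar / μ) :
    ∃ Q ∈ Ioo (0:ℝ) 1,
      (∀ s ∈ Ico (0:ℝ) Q, 0 < Pc s) ∧ Pc Q = 0 ∧
      ∀ s ∈ Ioo (0:ℝ) Q, Pc s < Pstar s :=
  phase_plane_comparison_general f Pstar Pc cstar c μ hμ hc hcc hf hf1 hf'1 hPstar_cont hPstar_pos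
    hPstar_ode hPstar0 hPstar1 hPc_cont hPc_ode hPc0
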